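/- arXiv:1311.4425 — 5 statements merged into one kernel-verified Lean document; each statement's English description precedes it below -/
import Mathlib

section
/- (Refinement of d-equivalences.) Let G be a topology with marked k-tuple ḡ. For all natural numbers j ≤ d and all vertices u, v ∈ V: if μ_d(u) = μ_d(v) then μ_j(u) = μ_j(v). In particular, for every d the relation ∼_d refines ∼_0, so the labeling Λ is constant on each ∼_d-equivalence class. -/
/-! Markings of topologies with a marked k-tuple, following the paper's
`d`-contraction construction. -/

noncomputable def dst {α : Type} (l : List α) : List α :=
  @List.destutter α (· ≠ ·) (fun _ _ => Classical.dec _) l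

/-- A topology: a finite nonempty directed graph with no self-loops. -/
structure Topo where
  V : Type
  fintypeV : Fintype V
  decEqV : DecidableEq V
  nonemptyV : Nonempty V
  E : V → V → Prop
  no_self_loops : ∀ v, ¬ E v v

attribute [instance] Topo.fintypeV Topo.decEqV Topo.nonemptyV

/-- `Mark k d`: the type of `d`-th markings (independent of the topology). -/
def Mark (k : ℕ) : ℕ → Type
  | 0 => Finset (Fin k)
  | d + 1 => Set (List (Mark k d))

def Mark.toSet {k d : ℕ} (m : Mark k (d + 1)) : Set (List (Mark k d)) := m

/-- The labeling `Λ`: `Λ (g i) = {i}` and `Λ v = ∅` for unmarked `v`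
(for injective `g`). -/
def lab {k : ℕ} (G : Topo) (g : Fin k → G.V) (v : G.V) : Finset (Fin k) :=
  Finset.univ.filter fun i => g i = v

/-- `InX G g v π`: `π` is a directed path starting at `v`, ending at a marked
vertex, with all non-final vertices unmarked.  (The set `X(v)` of the paper.) -/
def InX {k : ℕ} (G : Topo) (g : Fin k → G.V) (v : G.V) (π : List G.V) : Prop :=
  π ≠ [] ∧ π.head? = some v ∧ List.Chain' G.E π ∧
    (∀ u ∈ π.dropLast, u ∉ Set.range g) ∧
    ∃ w ∈ Set.range g, π.getLast? = some w

/-- The `d`-th marking `μ_d`. -/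
noncomputable def mu {k : ℕ} (G : Topo) (g : Fin k → G.V) : (d : ℕ) → G.V → Mark k d
  | 0, v => lab G g v
  | d + 1, v => { s : List (Mark k d) | ∃ π : List G.V, InX G g v π ∧ s = dst (π.map (mu G g d)) }

/-! Every path in `X(u)` starts at `u` and destuttering keeps the head of a list, so every
list in `μ_{d+1}(u)` starts with `μ_d(u)`. Hence `μ_{d+1}(u)` determines `μ_d(u)` unless
`X(u)` is empty; in that case `μ_{d+1}(u) = ∅`, and a vertex with `X(u) = ∅` is unmarked
(a marked `u` has the path `[u]`), so all its markings are empty. -/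

theorem List.head?_destutter' {α : Type*} (R : α → α → Prop) [DecidableRel R] (a : α) :
    ∀ l : List α, (l.destutter' R a).head? = some a
  | [] => rfl
  | b :: l => by
    rw [List.destutter'_cons]
    split
    · rfl
    · exact List.head?_destutter' R a l

theorem List.head?_destutter {α : Type*} (R : α → α → Prop) [DecidableRel R] :
    ∀ l : List α, (l.destutter R).head? = l.head?
  | [] => rfl
  | a :: l => by rw [List.destutter_cons', List.head?_destutter', List.head?_cons]

section Markings

variable {k : ℕ} {G : Topo} {g : Fin k → G.V}

theorem head?_dst_map_mu {d : ℕ} {u : G.V} {π : List G.V} (hπ : InX G g u π) :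
    (dst (π.map (mu G g d))).head? = some (mu G g d u) := by
  obtain ⟨-, hhead, -⟩ := hπ
  rw [dst, List.head?_destutter, List.head?_map, hhead, Option.map_some]

theorem lab_eq_empty_of_forall_not_InX {u : G.V} (hu : ∀ π, ¬ InX G g u π) :
    lab G g u = ∅ := by
  refine Finset.eq_empty_of_forall_notMem fun i hi => hu [u] ?_
  have hgi : g i = u := (Finset.mem_filter.1 hi).2
  exact ⟨List.cons_ne_nil _ _, rfl, List.isChain_singleton _, by simp, ⟨u, ⟨i, hgi⟩, rfl⟩⟩

theorem mu_succ_eq_empty_iff {d : ℕ} {u : G.V} :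
    (mu G g (d + 1) u).toSet = ∅ ↔ ∀ π, ¬ InX G g u π := by
  refine ⟨fun h π hπ => ?_, fun h => Set.eq_empty_of_forall_notMem ?_⟩
  · exact (Set.eq_empty_iff_forall_notMem.1 h) _ ⟨π, hπ, rfl⟩
  · rintro s ⟨π, hπ, -⟩
    exact h π hπ

theorem mu_eq_of_forall_not_InX {u v : G.V} (hu : ∀ π, ¬ InX G g u π)
    (hv : ∀ π, ¬ InX G g v π) : ∀ d, mu G g d u = mu G g d v
  | 0 => (lab_eq_empty_of_forall_not_InX hu).trans (lab_eq_empty_of_forall_not_InX hv).symm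
  | _ + 1 => (mu_succ_eq_empty_iff.2 hu).trans (mu_succ_eq_empty_iff.2 hv).symm

theorem mu_eq_of_mu_succ_eq {d : ℕ} {u v : G.V} (h : mu G g (d + 1) u = mu G g (d + 1) v) :
    mu G g d u = mu G g d v := by
  by_cases hu : ∃ π, InX G g u π
  · obtain ⟨π, hπ⟩ := hu
    have hmem : dst (π.map (mu G g d)) ∈ (mu G g (d + 1) v).toSet := h ▸ ⟨π, hπ, rfl⟩
    obtain ⟨π', hπ', heq⟩ := hmem
    have hhead := head?_dst_map_mu (d := d) hπ
    rw [heq, head?_dst_map_mu hπ'] at hhead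
    exact (Option.some.inj hhead).symm
  · rw [not_exists] at hu
    have hv : ∀ π, ¬ InX G g v π := mu_succ_eq_empty_iff.1 (h ▸ mu_succ_eq_empty_iff.2 hu)
    exact mu_eq_of_forall_not_InX hu hv d

theorem mu_eq_of_mu_eq_of_le {j d : ℕ} (hj : j ≤ d) {u v : G.V}
    (h : mu G g d u = mu G g d v) : mu G g j u = mu G g j v := by
  induction d, hj using Nat.le_induction with
  | base => exact h
  | succ d _ ih => exact ih (mu_eq_of_mu_succ_eq h)

end Markings

theorem stmt1_general {k : ℕ} (G : Topo) (g : Fin k → G.V)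
    (d j : ℕ) (hj : j ≤ d) (u v : G.V)
    (h : mu G g d u = mu G g d v) :
    mu G g j u = mu G g j v ∧ lab G g u = lab G g v :=
  ⟨mu_eq_of_mu_eq_of_le hj h, mu_eq_of_mu_eq_of_le (Nat.zero_le d) h⟩

/-- `∼_d` refines `∼_j` for `j ≤ d`; in particular the labeling
`Λ` is constant on `∼_d`-classes. -/
theorem stmt1 {k : ℕ} (hk : 1 ≤ k) (G : Topo) (g : Fin k → G.V)
    (hg : Function.Injective g) (d j : ℕ) (hj : j ≤ d) (u v : G.V)
    (h : mu G g d u = mu G g d v) :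
    mu G g j u = mu G g j v ∧ lab G g u = lab G g v :=
  stmt1_general G g d j hj u v h
end

section
/- (Finiteness of markings; core of the Finiteness Theorem.) For every k ≥ 1 and every d ≥ 0 there is a finite subset F ⊆ Mark d such that for every topology G, every k-tuple ḡ of pairwise distinct vertices of G, and every vertex v of G, the marking μ_d(v) (computed in G with respect to ḡ) belongs to F. -/
section Destutter

variable {α β γ : Type}

lemma dst_cons_cons_of_ne {a b : α} (h : a ≠ b) (l : List α) :
    dst (a :: b :: l) = a :: dst (b :: l) := by
  unfold dst
  rw [List.destutter_cons_cons, if_pos h, List.destutter_cons']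

lemma dst_cons_cons_of_eq {a b : α} (h : a = b) (l : List α) :
    dst (a :: b :: l) = dst (b :: l) := by
  subst h
  unfold dst
  rw [List.destutter_cons_cons, if_neg (not_not.mpr rfl), List.destutter_cons']

lemma length_dst_cons_cons_le (a b : α) (l : List α) :
    (dst (a :: b :: l)).length ≤ (dst (b :: l)).length + 1 := by
  by_cases h : a = b
  · rw [dst_cons_cons_of_eq h]; omega
  · rw [dst_cons_cons_of_ne h, List.length_cons]

lemma dst_sublist (l : List α) : (dst l).Sublist l :=
  @List.destutter_sublist α (· ≠ ·) (fun _ _ => Classical.dec _) l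

lemma mem_of_mem_dst {x : α} {l : List α} (h : x ∈ dst l) : x ∈ l :=
  (dst_sublist l).subset h

lemma length_dst_le_two_of_forall_mem_dropLast (a : α) :
    ∀ l : List α, (∀ x ∈ l.dropLast, x = a) → (dst l).length ≤ 2
  | [], _ | [_], _ | [_, _], _ => (dst_sublist _).length_le.trans (by simp)
  | x :: y :: z :: t, h => by
    have hxy : x = y := (h x (by simp)).trans (h y (by simp)).symm
    rw [dst_cons_cons_of_eq hxy]
    exact length_dst_le_two_of_forall_mem_dropLast a (y :: z :: t)
      fun w hw => h w (List.mem_cons_of_mem x hw)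

/-- The slack `m (g x)` in the induction is the number of strict decreases of `m` still
available before `f` has to change. -/
lemma length_dst_map_add_le {f : α → β} {g : α → γ} {m : γ → ℕ} {N : ℕ} :
    ∀ (x : α) (t : List α), (∀ y ∈ x :: t, m (g y) ≤ N) →
      (x :: t).IsChain (fun y z => f y = f z → g y = g z ∨ m (g z) < m (g y)) →
      (dst ((x :: t).map g)).length + N ≤ (dst ((x :: t).map f)).length * (N + 1) + m (g x)
  | x, [], _, _ => by simp [dst]; omega
  | x, y :: t, hm, hc => by
    obtain ⟨hxy, hc⟩ := List.isChain_cons_cons.mp hc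
    have ih := length_dst_map_add_le y t (fun z hz => hm z (List.mem_cons_of_mem x hz)) hc
    have hmy : m (g y) ≤ N := hm y (by simp)
    have hg := length_dst_cons_cons_le (g x) (g y) (t.map g)
    simp only [List.map_cons] at ih hg ⊢
    by_cases hf : f x = f y
    · rw [dst_cons_cons_of_eq hf]
      rcases hxy hf with hgxy | hlt
      · rw [dst_cons_cons_of_eq hgxy, hgxy]; exact ih
      · omega
    · rw [dst_cons_cons_of_ne hf, List.length_cons, add_one_mul]
      omega

lemma length_dst_map_le_mul {f : α → β} {g : α → γ} {m : γ → ℕ} {N : ℕ} {l : List α}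
    (hm : ∀ x ∈ l, m (g x) ≤ N)
    (hc : l.IsChain (fun x y => f x = f y → g x = g y ∨ m (g y) < m (g x))) :
    (dst (l.map g)).length ≤ (dst (l.map f)).length * (N + 1) := by
  cases l with
  | nil => simp [dst]
  | cons x t =>
    have := length_dst_map_add_le x t hm hc
    have := hm x (by simp)
    omega

end Destutter

lemma Set.Finite.finite_lists_length_le {α : Type*} {s : Set α} (hs : s.Finite) (n : ℕ) :
    {l : List α | (∀ x ∈ l, x ∈ s) ∧ l.length ≤ n}.Finite := by
  have : Finite s := hs
  refine ((List.finite_length_le s n).image (List.map Subtype.val)).subset ?_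
  rintro l ⟨hmem, hlen⟩
  exact ⟨l.pmap Subtype.mk hmem, by simpa using hlen, by simp [List.map_pmap]⟩

section Marking

variable {k : ℕ} {G : Topo} {g : Fin k → G.V}

lemma mem_mu_succ {d : ℕ} {v : G.V} {s : List (Mark k d)} :
    s ∈ Mark.toSet (mu G g (d + 1) v) ↔ ∃ π, InX G g v π ∧ s = dst (π.map (mu G g d)) := by
  rw [mu]; rfl

lemma mu_zero_of_notMem_range {v : G.V} (hv : v ∉ Set.range g) :
    mu G g 0 v = (∅ : Finset (Fin k)) := by
  show lab G g v = ∅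
  ext i
  simpa [lab] using fun h => hv ⟨i, h⟩

lemma InX.exists_eq_cons {v : G.V} {π : List G.V} (hπ : InX G g v π) : ∃ π', π = v :: π' := by
  obtain ⟨hne, hhead, -⟩ := hπ
  obtain ⟨x, π', rfl⟩ := List.exists_cons_of_ne_nil hne
  exact ⟨π', by simpa using hhead⟩

lemma InX.cons {u w : G.V} {π : List G.V} (hu : u ∉ Set.range g) (he : G.E u w)
    (hπ : InX G g w π) : InX G g u (u :: π) := by
  obtain ⟨π', rfl⟩ := hπ.exists_eq_cons
  obtain ⟨-, -, hchain, hdrop, w', hw', hlast⟩ := hπ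
  refine ⟨by simp, by simp, List.isChain_cons_cons.mpr ⟨he, hchain⟩, ?_,
    w', hw', by rwa [List.getLast?_cons_cons]⟩
  intro z hz
  rw [List.dropLast_cons_cons] at hz
  rcases List.mem_cons.mp hz with rfl | hz
  · exact hu
  · exact hdrop z hz

/-- Prepending `u` to a path of `X(w)` does not change its destuttered `μ_d`-sequence. -/
lemma mu_succ_subset_of_adj {d : ℕ} {u w : G.V} (hu : u ∉ Set.range g) (he : G.E u w)
    (hmu : mu G g d u = mu G g d w) :
    Mark.toSet (mu G g (d + 1) w) ⊆ Mark.toSet (mu G g (d + 1) u) := by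
  intro s hs
  obtain ⟨π, hπ, rfl⟩ := mem_mu_succ.mp hs
  obtain ⟨π', rfl⟩ := hπ.exists_eq_cons
  refine mem_mu_succ.mpr ⟨u :: w :: π', hπ.cons hu he, ?_⟩
  simp only [List.map_cons]
  rw [hmu, dst_cons_cons_of_eq rfl]

lemma isChain_mu_succ_eq_or_ncard_lt {d : ℕ}
    (hfin : ∀ v : G.V, (Mark.toSet (mu G g (d + 1) v)).Finite) :
    ∀ π : List G.V, π.IsChain G.E → (∀ u ∈ π.dropLast, u ∉ Set.range g) →
      π.IsChain (fun u w => mu G g d u = mu G g d w →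
        mu G g (d + 1) u = mu G g (d + 1) w ∨
        (Mark.toSet (mu G g (d + 1) w)).ncard < (Mark.toSet (mu G g (d + 1) u)).ncard)
  | [], _, _ => List.isChain_nil
  | [_], _, _ => List.isChain_singleton _
  | u :: w :: π, hchain, hdrop => by
    obtain ⟨he, hchain⟩ := List.isChain_cons_cons.mp hchain
    refine List.isChain_cons_cons.mpr ⟨fun hmu => ?_, isChain_mu_succ_eq_or_ncard_lt hfin
      (w :: π) hchain fun z hz => hdrop z (List.mem_cons_of_mem u hz)⟩
    have hsub := mu_succ_subset_of_adj (hdrop u (by simp)) he hmu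
    rcases hsub.eq_or_ssubset with heq | hlt
    · exact Or.inl heq.symm
    · exact Or.inr (Set.ncard_lt_ncard hlt (hfin u))

lemma length_dst_mu_zero_le_two {v : G.V} {π : List G.V} (hπ : InX G g v π) :
    (dst (π.map (mu G g 0))).length ≤ 2 := by
  refine length_dst_le_two_of_forall_mem_dropLast (show Mark k 0 from (∅ : Finset (Fin k))) _
    fun x hx => ?_
  rw [← List.map_dropLast] at hx
  obtain ⟨u, hu, rfl⟩ := List.mem_map.mp hx
  exact mu_zero_of_notMem_range (hπ.2.2.2.1 u hu)

lemma mu_succ_subset_lists {d : ℕ} {F : Set (Mark k d)} {B : ℕ} (hF : ∀ v, mu G g d v ∈ F)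
    (hB : ∀ v π, InX G g v π → (dst (π.map (mu G g d))).length ≤ B) (v : G.V) :
    Mark.toSet (mu G g (d + 1) v) ⊆ {l | (∀ x ∈ l, x ∈ F) ∧ l.length ≤ B} := by
  intro s hs
  obtain ⟨π, hπ, rfl⟩ := mem_mu_succ.mp hs
  refine ⟨fun x hx => ?_, hB v π hπ⟩
  obtain ⟨u, -, rfl⟩ := List.mem_map.mp (mem_of_mem_dst hx)
  exact hF u

lemma length_dst_mu_succ_le {d : ℕ} {S : Set (List (Mark k d))} (hS : S.Finite)
    (hmu : ∀ v, Mark.toSet (mu G g (d + 1) v) ⊆ S) {v : G.V} {π : List G.V}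
    (hπ : InX G g v π) :
    (dst (π.map (mu G g (d + 1)))).length ≤ (dst (π.map (mu G g d))).length * (S.ncard + 1) :=
  length_dst_map_le_mul (m := fun m => (Mark.toSet m).ncard)
    (fun u _ => Set.ncard_le_ncard (hmu u) hS)
    (isChain_mu_succ_eq_or_ncard_lt (fun u => hS.subset (hmu u)) π hπ.2.2.1 hπ.2.2.2.1)

end Marking

/-- Both claims together, by induction on `d`. The length bound puts every `μ_{d+1}(v)` inside
one finite set `S` of lists. Along a path, `μ_{d+1}` can only shrink (as a subset of `S`) while
`μ_d` stays constant, so it changes at most `|S|` times per constant block of `μ_d`. -/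
lemma exists_finset_mu_and_length_bound (k d : ℕ) : ∃ (F : Finset (Mark k d)) (B : ℕ),
    ∀ (G : Topo) (g : Fin k → G.V), (∀ v, mu G g d v ∈ F) ∧
      ∀ v π, InX G g v π → (dst (π.map (mu G g d))).length ≤ B := by
  induction d with
  | zero =>
    have : Fintype (Mark k 0) := inferInstanceAs (Fintype (Finset (Fin k)))
    exact ⟨Finset.univ, 2, fun G g =>
      ⟨fun _ => Finset.mem_univ _, fun _ _ => length_dst_mu_zero_le_two⟩⟩
  | succ d ih =>
    obtain ⟨F, B, hFB⟩ := ih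
    set S : Set (List (Mark k d)) := {l | (∀ x ∈ l, x ∈ (F : Set (Mark k d))) ∧ l.length ≤ B}
    have hS : S.Finite := F.finite_toSet.finite_lists_length_le B
    have hmu G g v : Mark.toSet (mu G g (d + 1) v) ⊆ S :=
      mu_succ_subset_lists (hFB G g).1 (hFB G g).2 v
    refine ⟨hS.finite_subsets.toFinset, B * (S.ncard + 1), fun G g => ⟨fun v => ?_, ?_⟩⟩
    · exact hS.finite_subsets.mem_toFinset.mpr (hmu G g v)
    · intro v π hπ
      exact (length_dst_mu_succ_le hS (hmu G g) hπ).trans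
        (Nat.mul_le_mul_right _ ((hFB G g).2 v π hπ))

theorem stmt3_general (k d : ℕ) :
    ∃ F : Finset (Mark k d), ∀ (G : Topo) (g : Fin k → G.V),
      Function.Injective g → ∀ v : G.V, mu G g d v ∈ F := by
  obtain ⟨F, _, hF⟩ := exists_finset_mu_and_length_bound k d
  exact ⟨F, fun G g _ v => (hF G g).1 v⟩

/-- Finiteness of markings: for every `k ≥ 1` and `d` there is a
finite set `F ⊆ Mark k d` containing all markings `μ_d(v)` over all topologies,
marked tuples and vertices. -/
theorem stmt3 (k d : ℕ) (hk : 1 ≤ k) :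
    ∃ F : Finset (Mark k d), ∀ (G : Topo) (g : Fin k → G.V),
      Function.Injective g → ∀ v : G.V, mu G g d v ∈ F :=
  stmt3_general k d
end

section
/- Let G be the uni-directional ring of size n ≥ 2 with marked k-tuple ḡ, where 1 ≤ k ≤ n. For an unmarked vertex v, let f(v) be the first marked vertex in the sequence v+1, v+2, … (addition in ZMod n). Then for every d ≥ 1 and every unmarked vertex v, μ_d(v) is the singleton { List.destutter (· ≠ ·) [μ_{d−1}(v), μ_{d−1}(f(v))] }; moreover, for all d ≥ 0, any two unmarked vertices u, v with f(u) = f(v) satisfy μ_d(u) = μ_d(v). -/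
/-- The uni-directional ring of size `n ≥ 2`: vertices `ZMod n`, edges `(i, i+1)`. -/
def uniRing (n : ℕ) (hn : 2 ≤ n) : Topo :=
  haveI : NeZero n := ⟨by omega⟩
  haveI : Fact (1 < n) := ⟨by omega⟩
  { V := ZMod n
    fintypeV := inferInstance
    decEqV := inferInstance
    nonemptyV := inferInstance
    E := fun i j => j = i + 1
    no_self_loops := fun _ h => one_ne_zero (left_eq_add.mp h) }

/-- `firstMarkedFwd g v w`: `w` is the first marked vertex (i.e. vertex in the
range of `g`) in the sequence `v+1, v+2, …`. -/
def firstMarkedFwd {k : ℕ} (n : ℕ) (g : Fin k → ZMod n) (v w : ZMod n) : Prop :=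
  ∃ j : ℕ, 1 ≤ j ∧ w = v + (j : ZMod n) ∧ w ∈ Set.range g ∧
    ∀ i : ℕ, 1 ≤ i → i < j → (v + (i : ZMod n)) ∉ Set.range g


/-! In the uni-directional ring the only path from an unmarked vertex `v` that stops at its
first marked vertex is `v, v + 1, …, f v`, so `X(v)` is a singleton. Its inner vertices are
unmarked and share the first marked vertex `f v`; by induction on `d` they all carry the
marking `μ_d(v)`, and destuttering collapses the path's marking sequence to
`[μ_d(v), μ_d(f v)]`. -/

open List

lemma List.destutter'_replicate_append {α : Type*} {R : α → α → Prop} [DecidableRel R]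
    {a : α} (ha : ¬R a a) (m : ℕ) (l : List α) :
    (replicate m a ++ l).destutter' R a = l.destutter' R a := by
  induction m with
  | zero => rfl
  | succ m ih => rw [replicate_succ, cons_append, destutter'_cons_neg _ ha, ih]

lemma dst_replicate_append {α : Type} (a : α) {m : ℕ} (hm : m ≠ 0) (l : List α) :
    dst (replicate m a ++ l) = dst (a :: l) := by
  obtain ⟨m, rfl⟩ := Nat.exists_eq_succ_of_ne_zero hm
  unfold dst
  rw [replicate_succ, cons_append, destutter_cons', destutter_cons']
  exact @destutter'_replicate_append _ _ (fun _ _ => Classical.dec _) _ (not_not_intro rfl) _ _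

section SuccPath

variable {R : Type*} [AddCommMonoidWithOne R]

def succPath (v : R) (t : ℕ) : List R :=
  (range (t + 1)).map fun i : ℕ => v + i

lemma succPath_zero (v : R) : succPath v 0 = [v] := by
  simp [succPath]

lemma succPath_succ (v : R) (t : ℕ) : succPath v (t + 1) = v :: succPath (v + 1) t := by
  rw [succPath, succPath, range_succ_eq_map, map_cons, map_map, Nat.cast_zero, add_zero]
  congr 1
  refine map_congr_left fun i _ => ?_
  simp only [Function.comp_apply, Nat.cast_succ]
  abel

lemma head?_succPath (v : R) (t : ℕ) : (succPath v t).head? = some v := by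
  cases t <;> simp [succPath_zero, succPath_succ]

lemma getLast?_succPath (v : R) (t : ℕ) : (succPath v t).getLast? = some (v + t) := by
  simp [succPath, range_succ]

lemma dropLast_succPath (v : R) (t : ℕ) :
    (succPath v t).dropLast = (range t).map fun i : ℕ => v + i := by
  simp [succPath, range_succ]

lemma isChain_succPath (v : R) (t : ℕ) : (succPath v t).IsChain fun a b => b = a + 1 := by
  induction t generalizing v with
  | zero => simp [succPath_zero]
  | succ t ih =>
    rw [succPath_succ]
    cases t <;> simp_all [succPath_zero, succPath_succ]

lemma exists_eq_succPath {π : List R} {v : R} (hπ : π.IsChain fun a b => b = a + 1)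
    (hv : π.head? = some v) : ∃ t, π = succPath v t := by
  induction π generalizing v with
  | nil => simp at hv
  | cons x l ih =>
    obtain rfl : x = v := by simpa using hv
    cases l with
    | nil => exact ⟨0, (succPath_zero x).symm⟩
    | cons y l =>
      obtain ⟨rfl, hl⟩ := isChain_cons_cons.mp hπ
      obtain ⟨t, ht⟩ := ih hl rfl
      exact ⟨t + 1, by rw [succPath_succ, ht]⟩

lemma map_succPath_of_forall_lt {β : Type*} (φ : R → β) {v : R} {t : ℕ}
    (hφ : ∀ i < t, φ (v + i) = φ v) :
    (succPath v t).map φ = replicate t (φ v) ++ [φ (v + t)] := by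
  simp only [succPath, range_succ, map_append, map_map, map_singleton]
  congr 1
  exact eq_replicate_iff.2 ⟨by simp, by simpa using hφ⟩

end SuccPath

lemma lab_eq_empty_of_notMem_range {k : ℕ} {G : Topo} {g : Fin k → G.V} {v : G.V}
    (hv : v ∉ Set.range g) : lab G g v = ∅ :=
  Finset.filter_false_of_mem fun i _ hi => hv ⟨i, hi⟩

lemma mu_succ_eq_image {k : ℕ} (G : Topo) (g : Fin k → G.V) (d : ℕ) (v : G.V) :
    Mark.toSet (mu G g (d + 1) v) = (fun π => dst (π.map (mu G g d))) '' {π | InX G g v π} := by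
  ext s
  exact exists_congr fun π => and_congr_right fun _ => eq_comm

section UniRing

variable {k n : ℕ} (hn : 2 ≤ n) (g : Fin k → ZMod n)

def IsFirstMarkedOffset (v : ZMod n) (j : ℕ) : Prop :=
  1 ≤ j ∧ v + j ∈ Set.range g ∧ ∀ i : ℕ, 1 ≤ i → i < j → v + i ∉ Set.range g

def MuDependsOnFirstMarked (d : ℕ) : Prop :=
  ∀ u v w : ZMod n, u ∉ Set.range g → firstMarkedFwd n g u w →
    v ∉ Set.range g → firstMarkedFwd n g v w →
      mu (uniRing n hn) g d u = mu (uniRing n hn) g d v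

variable {g}

lemma firstMarkedFwd_iff {v w : ZMod n} :
    firstMarkedFwd n g v w ↔ ∃ j, IsFirstMarkedOffset g v j ∧ w = v + j := by
  constructor
  · rintro ⟨j, hj, rfl, hw, hmin⟩
    exact ⟨j, ⟨hj, hw, hmin⟩, rfl⟩
  · rintro ⟨j, ⟨hj, hw, hmin⟩, rfl⟩
    exact ⟨j, hj, rfl, hw, hmin⟩

lemma IsFirstMarkedOffset.unique {v : ZMod n} {j j' : ℕ} (h : IsFirstMarkedOffset g v j)
    (h' : IsFirstMarkedOffset g v j') : j = j' := by
  by_contra hne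
  rcases Nat.lt_or_gt_of_ne hne with hlt | hlt
  · exact h'.2.2 j h.1 hlt h.2.1
  · exact h.2.2 j' h'.1 hlt h'.2.1

lemma IsFirstMarkedOffset.add {v : ZMod n} {i j : ℕ} (h : IsFirstMarkedOffset g v j)
    (hi : i < j) : IsFirstMarkedOffset g (v + i) (j - i) := by
  obtain ⟨-, hw, hmin⟩ := h
  refine ⟨by omega, ?_, fun m hm hmj => ?_⟩
  · rwa [add_assoc, ← Nat.cast_add, Nat.add_sub_cancel' hi.le]
  · rw [add_assoc, ← Nat.cast_add]
    exact hmin (i + m) (by omega) (by omega)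

lemma inX_uniRing_iff {v : ZMod n} {j : ℕ} (hv : v ∉ Set.range g)
    (hj : IsFirstMarkedOffset g v j) {π : List (ZMod n)} :
    InX (uniRing n hn) g v π ↔ π = succPath v j := by
  -- `(uniRing n hn).V` is `ZMod n` only after unfolding `uniRing`, which `rw` will not do.
  change (π ≠ [] ∧ π.head? = some v ∧ π.IsChain (fun a b : ZMod n => b = a + 1) ∧
    (∀ u ∈ π.dropLast, u ∉ Set.range g) ∧
    ∃ w ∈ Set.range g, π.getLast? = some w) ↔ _
  constructor
  · rintro ⟨-, hhead, hchain, hdrop, w, hw, hlast⟩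
    obtain ⟨t, rfl⟩ := exists_eq_succPath hchain hhead
    rw [getLast?_succPath, Option.some_inj] at hlast
    subst hlast
    have hmin : ∀ i < t, v + (i : ZMod n) ∉ Set.range g := fun i hi =>
      hdrop _ (by rw [dropLast_succPath]; exact mem_map_of_mem (mem_range.2 hi))
    have ht : 1 ≤ t :=
      Nat.one_le_iff_ne_zero.2 fun ht => hv (by rwa [ht, Nat.cast_zero, add_zero] at hw)
    rw [IsFirstMarkedOffset.unique ⟨ht, hw, fun i _ hi => hmin i hi⟩ hj]
  · rintro rfl
    refine ⟨ne_nil_of_mem (mem_of_mem_head? (head?_succPath v j)), head?_succPath v j,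
      isChain_succPath v j, fun u hu => ?_, v + (j : ZMod n), hj.2.1, getLast?_succPath v j⟩
    rw [dropLast_succPath] at hu
    obtain ⟨i, hi, rfl⟩ := mem_map.1 hu
    rcases Nat.eq_zero_or_pos i with rfl | hi0
    · rwa [Nat.cast_zero, add_zero]
    · exact hj.2.2 i hi0 (mem_range.1 hi)

lemma mu_succ_uniRing {d : ℕ} (hd : MuDependsOnFirstMarked hn g d) {v w : ZMod n}
    (hv : v ∉ Set.range g) (hw : firstMarkedFwd n g v w) :
    Mark.toSet (mu (uniRing n hn) g (d + 1) v) =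
      {dst [mu (uniRing n hn) g d v, mu (uniRing n hn) g d w]} := by
  obtain ⟨j, hj, rfl⟩ := firstMarkedFwd_iff.1 hw
  have hX : {π | InX (uniRing n hn) g v π} = {succPath v j} :=
    Set.ext fun π => inX_uniRing_iff hn hv hj
  have hconst : ∀ i < j, mu (uniRing n hn) g d (v + (i : ZMod n)) = mu (uniRing n hn) g d v := by
    intro i hi
    rcases Nat.eq_zero_or_pos i with rfl | hi0
    · rw [Nat.cast_zero, add_zero]
    · refine hd _ v _ (hj.2.2 i hi0 hi) (firstMarkedFwd_iff.2 ⟨j - i, hj.add hi, ?_⟩) hv hw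
      rw [add_assoc, ← Nat.cast_add, Nat.add_sub_cancel' hi.le]
  refine (mu_succ_eq_image (uniRing n hn) g d v).trans ?_
  rw [hX]
  refine Set.image_singleton.trans (congrArg _ ?_)
  erw [map_succPath_of_forall_lt _ hconst]
  exact dst_replicate_append _ (Nat.one_le_iff_ne_zero.1 hj.1) _

lemma muDependsOnFirstMarked (d : ℕ) : MuDependsOnFirstMarked hn g d := by
  induction d with
  | zero =>
    intro u v w hu _ hv _
    exact (lab_eq_empty_of_notMem_range hu).trans (lab_eq_empty_of_notMem_range hv).symm
  | succ d ih =>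
    intro u v w hu hwu hv hwv
    have hsucc := mu_succ_uniRing hn ih hu hwu
    rw [ih u v w hu hwu hv hwv, ← mu_succ_uniRing hn ih hv hwv] at hsucc
    exact hsucc

end UniRing

theorem stmt5_general {k n : ℕ} (hn : 2 ≤ n)
    (g : Fin k → ZMod n)
    (f : ZMod n → ZMod n)
    (hf : ∀ v : ZMod n, v ∉ Set.range g → firstMarkedFwd n g v (f v)) :
    (∀ (d : ℕ) (v : ZMod n), v ∉ Set.range g →
      Mark.toSet (mu (uniRing n hn) g (d + 1) v) =
        {dst [mu (uniRing n hn) g d v, mu (uniRing n hn) g d (f v)]}) ∧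
    (∀ (d : ℕ) (u v : ZMod n), u ∉ Set.range g → v ∉ Set.range g → f u = f v →
      mu (uniRing n hn) g d u = mu (uniRing n hn) g d v) :=
  ⟨fun d v hv => mu_succ_uniRing hn (muDependsOnFirstMarked hn d) hv (hf v hv),
    fun d u v hu hv huv =>
      muDependsOnFirstMarked hn d u v (f v) hu (huv ▸ hf u hu) hv (hf v hv)⟩

/-- in the uni-directional ring of size `n`, with `f v` the first
marked vertex after `v`, for `d ≥ 1` (written `d + 1`) and unmarked `v`,
`μ_{d+1}(v) = { destutter [μ_d(v), μ_d(f v)] }`; moreover unmarked vertices with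
the same `f`-value have the same marking at every level `d`. -/
theorem stmt5 {k n : ℕ} (hk : 1 ≤ k) (hkn : k ≤ n) (hn : 2 ≤ n)
    (g : Fin k → ZMod n) (hg : Function.Injective g)
    (f : ZMod n → ZMod n)
    (hf : ∀ v : ZMod n, v ∉ Set.range g → firstMarkedFwd n g v (f v)) :
    (∀ (d : ℕ) (v : ZMod n), v ∉ Set.range g →
      Mark.toSet (mu (uniRing n hn) g (d + 1) v) =
        {dst [mu (uniRing n hn) g d v, mu (uniRing n hn) g d (f v)]}) ∧
    (∀ (d : ℕ) (u v : ZMod n), u ∉ Set.range g → v ∉ Set.range g → f u = f v →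
      mu (uniRing n hn) g d u = mu (uniRing n hn) g d v) :=
  stmt5_general hn g f hf
end

section
/- Let G be the uni-directional ring of size n ≥ 2 with marked k-tuple ḡ, where 1 ≤ k ≤ n. For every d ≥ 1 the equivalence ∼_d coincides with ∼_1, and the number of ∼_d-equivalence classes of vertices is at most 2k. -/
/-!
On the uni-directional ring every vertex `v` has exactly one path in `X(v)`: the arc from `v` to
`nextMarked v`, the first marked vertex at or after `v`. Hence `μ_{d+1}(v)` is the singleton of
the destuttered word of `μ_d` along that arc. Call a colouring adapted if it is injective on the
marked vertices, never gives an unmarked vertex the colour of a marked one, and is constant on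
unmarked vertices with the same `nextMarked`. For an adapted `μ_d` the word is `[μ_d v]` for marked
`v` and `[μ_d v, μ_d (nextMarked v)]` otherwise, so `μ_{d+1}(u) = μ_{d+1}(v)` exactly when `u` and
`v` have the same key `(v is marked, nextMarked v)`. A colouring with these fibres is adapted again,
and so is `Λ = μ_0`; by induction all `μ_d` with `d ≥ 1` have the fibres of the key, which takes
at most `2k` values.
-/

lemma mem_lab {k : ℕ} {G : Topo} {g : Fin k → G.V} {v : G.V} {i : Fin k} :
    i ∈ lab G g v ↔ g i = v := by
  simp [lab]

lemma dst_replicate_append_s6 {α : Type} (t : ℕ) {a b : α} (hab : a ≠ b) :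
    dst (List.replicate (t + 1) a ++ [b]) = [a, b] := by
  -- the instance `dst` is built with, so that the `destutter'` lemmas apply
  let _ : DecidableRel fun x y : α => x ≠ y := fun _ _ => Classical.dec _
  rw [dst, List.replicate_succ, List.cons_append, List.destutter_cons']
  induction t with
  | zero => exact List.destutter'_cons_pos _ hab
  | succ t ih =>
    rw [List.replicate_succ, List.cons_append, List.destutter'_cons_neg _ (not_not.mpr rfl), ih]

lemma Set.ncard_range_le_of_factorsThrough {α β γ : Type*} [Finite α] {f : α → β} {φ : α → γ}
    (h : f.FactorsThrough φ) : (Set.range f).ncard ≤ (Set.range φ).ncard := by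
  have hrange : Set.range f = Set.range fun c : Set.range φ => f c.2.choose := by
    refine Set.Subset.antisymm ?_ (Set.range_subset_iff.mpr fun c => ⟨_, rfl⟩)
    rintro _ ⟨a, rfl⟩
    exact ⟨⟨φ a, a, rfl⟩, h (Exists.choose_spec (⟨a, rfl⟩ : ∃ b, φ b = φ a))⟩
  rw [hrange, ← Nat.card_coe_set_eq, ← Nat.card_coe_set_eq]
  exact Finite.card_range_le _

section NextMarked

variable {k n : ℕ} [NeZero n]

lemma exists_add_natCast_mem_range (hk : 1 ≤ k) (g : Fin k → ZMod n) (v : ZMod n) :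
    ∃ j : ℕ, v + j ∈ Set.range g :=
  ⟨(g ⟨0, hk⟩ - v).val, ⟨0, hk⟩, by rw [ZMod.natCast_zmod_val]; ring⟩

open Classical in
noncomputable def distToMarked (hk : 1 ≤ k) (g : Fin k → ZMod n) (v : ZMod n) : ℕ :=
  Nat.find (exists_add_natCast_mem_range hk g v)

noncomputable def nextMarked (hk : 1 ≤ k) (g : Fin k → ZMod n) (v : ZMod n) : ZMod n :=
  v + distToMarked hk g v

variable {hk : 1 ≤ k} {g : Fin k → ZMod n}

lemma nextMarked_mem_range (v : ZMod n) : nextMarked hk g v ∈ Set.range g := by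
  classical
  exact Nat.find_spec (exists_add_natCast_mem_range hk g v)

lemma add_natCast_notMem_range {v : ZMod n} {i : ℕ} (hi : i < distToMarked hk g v) :
    v + i ∉ Set.range g := by
  classical
  exact Nat.find_min (exists_add_natCast_mem_range hk g v) hi

lemma distToMarked_le {v : ZMod n} {t : ℕ} (ht : v + t ∈ Set.range g) :
    distToMarked hk g v ≤ t := by
  classical
  exact Nat.find_min' (exists_add_natCast_mem_range hk g v) ht

lemma distToMarked_eq_zero_iff {v : ZMod n} : distToMarked hk g v = 0 ↔ v ∈ Set.range g := by
  classical
  simp [distToMarked, Nat.find_eq_zero]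

lemma nextMarked_of_mem_range {v : ZMod n} (hv : v ∈ Set.range g) : nextMarked hk g v = v := by
  simp [nextMarked, distToMarked_eq_zero_iff.mpr hv]

lemma distToMarked_add {v : ZMod n} {i : ℕ} (hi : i ≤ distToMarked hk g v) :
    distToMarked hk g (v + i) = distToMarked hk g v - i := by
  have hcast : (v + i) + ((distToMarked hk g v - i : ℕ) : ZMod n) = nextMarked hk g v := by
    rw [Nat.cast_sub hi, nextMarked]; ring
  refine le_antisymm (distToMarked_le (hcast ▸ nextMarked_mem_range v)) ?_
  by_contra! hlt
  have hmem := nextMarked_mem_range (hk := hk) (g := g) (v + i)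
  rw [nextMarked, add_assoc, ← Nat.cast_add] at hmem
  exact add_natCast_notMem_range (by omega) hmem

lemma nextMarked_add {v : ZMod n} {i : ℕ} (hi : i ≤ distToMarked hk g v) :
    nextMarked hk g (v + i) = nextMarked hk g v := by
  rw [nextMarked, distToMarked_add hi, Nat.cast_sub hi, nextMarked]; ring

end NextMarked

section RingPath

variable {k n : ℕ}

def ringPath (v : ZMod n) (t : ℕ) : List (ZMod n) :=
  (List.range (t + 1)).map (fun i : ℕ => v + i)

lemma ringPath_eq_append (v : ZMod n) (t : ℕ) :
    ringPath v t = (List.range t).map (fun i : ℕ => v + i) ++ [v + t] := by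
  rw [ringPath, List.range_succ, List.map_append, List.map_singleton]

lemma ringPath_isChain (v : ZMod n) (t : ℕ) :
    (ringPath v t).IsChain fun i j => j = i + 1 := by
  rw [ringPath, List.isChain_map, List.isChain_range_succ]
  intro m _
  push_cast
  ring

lemma eq_ringPath_of_isChain {π : List (ZMod n)} {v : ZMod n} (hv : π.head? = some v)
    (hπ : π.IsChain fun i j => j = i + 1) : π = ringPath v (π.length - 1) := by
  have hlen : 0 < π.length := List.length_pos_iff.mpr (by rintro rfl; simp at hv)
  refine List.ext_getElem (by simp [ringPath]; omega) fun i hi _ => ?_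
  have hsucc : π.IsChain fun x y => x + 1 = y := hπ.imp fun _ _ => Eq.symm
  rw [← hsucc.iterate_eq_of_apply_eq i hi, add_right_iterate_apply]
  simp [ringPath, List.head?_eq_getElem?, List.getElem?_eq_getElem hlen] at hv ⊢
  rw [hv]

lemma inX_uniRing_iff_s6 (hn : 2 ≤ n) [NeZero n] (hk : 1 ≤ k) (g : Fin k → ZMod n)
    (v : ZMod n) (π : List (ZMod n)) :
    InX (uniRing n hn) g v π ↔ π = ringPath v (distToMarked hk g v) := by
  change (π ≠ [] ∧ π.head? = some v ∧ π.IsChain (fun i j : ZMod n => j = i + 1) ∧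
    (∀ u ∈ π.dropLast, u ∉ Set.range g) ∧ ∃ w ∈ Set.range g, π.getLast? = some w) ↔ _
  constructor
  · rintro ⟨-, hhead, hchain, hfree, w, hw, hlast⟩
    set t := π.length - 1
    have hπ : π = ringPath v t := eq_ringPath_of_isChain hhead hchain
    rw [hπ, ringPath_eq_append, List.getLast?_concat, Option.some_inj] at hlast
    rw [hπ, ringPath_eq_append, List.dropLast_concat] at hfree
    suffices t = distToMarked hk g v by rw [hπ, this]
    refine le_antisymm ?_ (distToMarked_le (hlast ▸ hw))
    by_contra! hlt
    exact hfree _ (List.mem_map_of_mem (List.mem_range.mpr hlt)) (nextMarked_mem_range v)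
  · rintro rfl
    refine ⟨by simp [ringPath, List.range_succ_eq_map], by simp [ringPath, List.range_succ_eq_map],
      ringPath_isChain v _, ?_, nextMarked hk g v, nextMarked_mem_range v,
      by rw [ringPath_eq_append, List.getLast?_concat, nextMarked]⟩
    rw [ringPath_eq_append, List.dropLast_concat]
    rintro _ hu
    obtain ⟨i, hi, rfl⟩ := List.mem_map.mp hu
    exact add_natCast_notMem_range (List.mem_range.mp hi)

end RingPath

section Markings

variable {k n : ℕ} [NeZero n] (hk : 1 ≤ k) (g : Fin k → ZMod n)

noncomputable def ringKey (v : ZMod n) : Prop × ZMod n :=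
  (v ∈ Set.range g, nextMarked hk g v)

structure IsAdapted {α : Type*} (m : ZMod n → α) : Prop where
  injOn_range : Set.InjOn m (Set.range g)
  ne_of_notMem_of_mem : ∀ ⦃u v⦄, u ∉ Set.range g → v ∈ Set.range g → m u ≠ m v
  eq_of_nextMarked_eq : ∀ ⦃u v⦄, u ∉ Set.range g → v ∉ Set.range g →
    nextMarked hk g u = nextMarked hk g v → m u = m v

noncomputable def ringWord {α : Type} (m : ZMod n → α) (v : ZMod n) : List α :=
  dst ((ringPath v (distToMarked hk g v)).map m)

variable {hk g}

lemma ringWord_of_mem_range {α : Type} (m : ZMod n → α) {v : ZMod n} (hv : v ∈ Set.range g) :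
    ringWord hk g m v = [m v] := by
  rw [ringWord, distToMarked_eq_zero_iff.mpr hv, ringPath_eq_append]
  simp [dst]

lemma ringWord_of_notMem_range {α : Type} {m : ZMod n → α} (hm : IsAdapted hk g m) {v : ZMod n}
    (hv : v ∉ Set.range g) : ringWord hk g m v = [m v, m (nextMarked hk g v)] := by
  obtain ⟨t, ht⟩ : ∃ t, distToMarked hk g v = t + 1 :=
    Nat.exists_eq_add_one.mpr (Nat.pos_of_ne_zero (mt distToMarked_eq_zero_iff.mp hv))
  have hconst :
      ((List.range (t + 1)).map fun i : ℕ => v + i).map m = List.replicate (t + 1) (m v) := by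
    refine List.eq_replicate_iff.mpr ⟨by simp, ?_⟩
    simp only [List.map_map, List.mem_map, List.mem_range, Function.comp_apply]
    rintro _ ⟨i, hi, rfl⟩
    exact hm.eq_of_nextMarked_eq (add_natCast_notMem_range (ht ▸ hi)) hv (nextMarked_add (by omega))
  rw [ringWord, ringPath_eq_append, List.map_append, List.map_singleton, ← nextMarked, ht, hconst]
  exact dst_replicate_append_s6 t (hm.ne_of_notMem_of_mem hv (nextMarked_mem_range v))

lemma ringWord_eq_ringWord_iff {α : Type} {m : ZMod n → α} (hm : IsAdapted hk g m)
    (u v : ZMod n) :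
    ringWord hk g m u = ringWord hk g m v ↔ ringKey hk g u = ringKey hk g v := by
  simp only [ringKey, Prod.mk.injEq, eq_iff_iff]
  by_cases hu : u ∈ Set.range g <;> by_cases hv : v ∈ Set.range g
  · simp [ringWord_of_mem_range, hu, hv, nextMarked_of_mem_range, hm.injOn_range.eq_iff]
  · simp [ringWord_of_mem_range, ringWord_of_notMem_range hm, hu, hv]
  · simp [ringWord_of_mem_range, ringWord_of_notMem_range hm, hu, hv]
  · simp only [ringWord_of_notMem_range hm hu, ringWord_of_notMem_range hm hv, hu, hv,
      List.cons.injEq, and_true, iff_self, true_and]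
    exact ⟨fun h => hm.injOn_range (nextMarked_mem_range u) (nextMarked_mem_range v) h.2,
      fun h => ⟨hm.eq_of_nextMarked_eq hu hv h, congrArg m h⟩⟩

lemma isAdapted_of_eq_iff {α : Type*} {m : ZMod n → α}
    (hm : ∀ u v, m u = m v ↔ ringKey hk g u = ringKey hk g v) : IsAdapted hk g m where
  injOn_range u hu v hv h := by
    simpa [ringKey, nextMarked_of_mem_range, hu, hv] using (hm u v).mp h
  ne_of_notMem_of_mem u v hu hv h := by
    simpa [ringKey, hu, hv] using (hm u v).mp h
  eq_of_nextMarked_eq u v hu hv h := (hm u v).mpr (by simp [ringKey, hu, hv, h])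

end Markings

section UniRing

variable {k n : ℕ} (hn : 2 ≤ n) [NeZero n] {hk : 1 ≤ k} {g : Fin k → ZMod n}

lemma mu_succ_uniRing_s6 (d : ℕ) (v : ZMod n) :
    (mu (uniRing n hn) g (d + 1) v).toSet = {ringWord hk g (mu (uniRing n hn) g d) v} := by
  ext s
  change (∃ π : List (ZMod n), InX (uniRing n hn) g v π ∧
    s = dst (π.map (mu (uniRing n hn) g d))) ↔ _
  simp only [inX_uniRing_iff_s6 hn hk, exists_eq_left, ringWord, Set.mem_singleton_iff]
  rfl

lemma isAdapted_lab : IsAdapted hk g (lab (uniRing n hn) g) where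
  injOn_range := by
    rintro _ ⟨i, rfl⟩ v - h
    exact mem_lab.mp ((Finset.ext_iff.mp h i).mp (mem_lab.mpr rfl))
  ne_of_notMem_of_mem u := by
    rintro _ hu ⟨i, rfl⟩ h
    exact hu ⟨i, mem_lab.mp ((Finset.ext_iff.mp h i).mpr (mem_lab.mpr rfl))⟩
  eq_of_nextMarked_eq u v hu hv _ := by
    ext i
    exact iff_of_false (fun h => hu ⟨i, mem_lab.mp h⟩) (fun h => hv ⟨i, mem_lab.mp h⟩)

lemma mu_succ_eq_iff_of_isAdapted {d : ℕ} (hm : IsAdapted hk g (mu (uniRing n hn) g d))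
    (u v : ZMod n) :
    mu (uniRing n hn) g (d + 1) u = mu (uniRing n hn) g (d + 1) v ↔
      ringKey hk g u = ringKey hk g v := by
  change (mu (uniRing n hn) g (d + 1) u).toSet = (mu (uniRing n hn) g (d + 1) v).toSet ↔ _
  rw [mu_succ_uniRing_s6 (hk := hk), mu_succ_uniRing_s6 (hk := hk), Set.singleton_eq_singleton_iff,
    ringWord_eq_ringWord_iff hm]

end UniRing

lemma mu_eq_iff_ringKey_eq {k n : ℕ} (hn : 2 ≤ n) [NeZero n] (hk : 1 ≤ k) (g : Fin k → ZMod n)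
    {d : ℕ} (hd : 1 ≤ d) (u v : ZMod n) :
    mu (uniRing n hn) g d u = mu (uniRing n hn) g d v ↔ ringKey hk g u = ringKey hk g v := by
  induction d, hd using Nat.le_induction generalizing u v with
  | base => exact mu_succ_eq_iff_of_isAdapted hn (isAdapted_lab hn) u v
  | succ d _ ih => exact mu_succ_eq_iff_of_isAdapted hn (isAdapted_of_eq_iff ih) u v

lemma ncard_range_ringKey_le {k n : ℕ} [NeZero n] (hk : 1 ≤ k) (g : Fin k → ZMod n) :
    (Set.range (ringKey hk g)).ncard ≤ 2 * k := by
  have hsub : Set.range (ringKey hk g) ⊆ Set.univ ×ˢ Set.range g :=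
    Set.range_subset_iff.mpr fun v => ⟨trivial, nextMarked_mem_range v⟩
  have hcard : (Set.range g).ncard ≤ k := by
    simpa only [Nat.card_coe_set_eq, Nat.card_fin] using Finite.card_range_le g
  calc (Set.range (ringKey hk g)).ncard
      ≤ (Set.univ ×ˢ Set.range g).ncard := Set.ncard_le_ncard hsub (Set.toFinite _)
    _ = 2 * (Set.range g).ncard := by simp [Set.ncard_prod, Nat.card_eq_fintype_card]
    _ ≤ 2 * k := by omega

theorem stmt6_general {k n : ℕ} (hk : 1 ≤ k) (hn : 2 ≤ n)
    (g : Fin k → ZMod n) (d : ℕ) (hd : 1 ≤ d) :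
    (∀ u v : ZMod n,
      mu (uniRing n hn) g d u = mu (uniRing n hn) g d v ↔
        mu (uniRing n hn) g 1 u = mu (uniRing n hn) g 1 v) ∧
    (Set.range (mu (uniRing n hn) g d)).ncard ≤ 2 * k := by
  have : NeZero n := ⟨by omega⟩
  have hmu := mu_eq_iff_ringKey_eq hn hk g hd
  refine ⟨fun u v => (hmu u v).trans (mu_eq_iff_ringKey_eq hn hk g le_rfl u v).symm, ?_⟩
  calc (Set.range (mu (uniRing n hn) g d)).ncard
      ≤ (Set.range (ringKey hk g)).ncard :=
        Set.ncard_range_le_of_factorsThrough fun u v => (hmu u v).mpr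
    _ ≤ 2 * k := ncard_range_ringKey_le hk g

/-- in the uni-directional ring of size `n`, for every `d ≥ 1` the
equivalence `∼_d` coincides with `∼_1`, and the number of `∼_d`-classes is at
most `2k`. -/
theorem stmt6 {k n : ℕ} (hk : 1 ≤ k) (hkn : k ≤ n) (hn : 2 ≤ n)
    (g : Fin k → ZMod n) (hg : Function.Injective g) (d : ℕ) (hd : 1 ≤ d) :
    (∀ u v : ZMod n,
      mu (uniRing n hn) g d u = mu (uniRing n hn) g d v ↔
        mu (uniRing n hn) g 1 u = mu (uniRing n hn) g 1 v) ∧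
    (Set.range (mu (uniRing n hn) g d)).ncard ≤ 2 * k :=
  stmt6_general hk hn g d hd
end

section
/- Let k ≥ 1, n ≥ k + 1, let G be the clique of size n, and let ḡ be a k-tuple of pairwise distinct vertices. Then for every d ≥ 1 and every unmarked vertex v, μ_d(v) = { List.destutter (· ≠ ·) [μ_{d−1}(v), μ_{d−1}(g_j)] : 1 ≤ j ≤ k }; for every d ≥ 0 any two unmarked vertices are ∼_d-equivalent, and no marked vertex is ∼_d-equivalent to any other vertex; hence for every d there are exactly k + 1 equivalence classes of ∼_d, and ∼_d coincides with ∼_1 for all d ≥ 1. -/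
/-- The clique of size `n`: vertices `Fin n`, edges between all pairs of
distinct vertices. -/
def clique (n : ℕ) (hn : 0 < n) : Topo :=
  haveI : NeZero n := ⟨by omega⟩
  { V := Fin n
    fintypeV := inferInstance
    decEqV := inferInstance
    nonemptyV := ⟨0⟩
    E := fun i j => i ≠ j
    no_self_loops := fun _ h => h rfl }


/-! A marked vertex `g i` has the single path `[g i]`, so `μ_{d+1}(g i) = {[μ_d(g i)]}`; since
every list in `μ_{d+1}(v)` starts with `μ_d(v)`, a marked vertex keeps being distinguished from
every other vertex at all depths. In the clique every unmarked vertex is adjacent to every marked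
one, so if the unmarked vertices share their `d`-th marking `c`, the path `v … g j` destutters to
`[c, μ_d(g j)]`, and all such lists occur via `[v, g j]`; by induction the unmarked vertices stay
equivalent. So `∼_d` is "equal, or both unmarked" for every `d`, with `k + 1` classes. -/

namespace List

theorem head?_destutter'_s8 {α : Type*} (R : α → α → Prop) [DecidableRel R] (a : α)
    (l : List α) :
    (l.destutter' R a).head? = some a := by
  induction l generalizing a with
  | nil => rfl
  | cons b l ih =>
    rw [destutter'_cons]
    split_ifs
    · rfl
    · exact ih a

end List

section Destutter

variable {α : Type}

theorem head?_dst (l : List α) : (dst l).head? = l.head? := by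
  cases l with
  | nil => rfl
  | cons a l => exact @List.head?_destutter'_s8 _ _ (fun _ _ => Classical.dec _) a l

theorem dst_append_singleton_of_forall_eq {c b : α} {l : List α} (hl : l ≠ [])
    (h : ∀ x ∈ l, x = c) : dst (l ++ [b]) = dst [c, b] := by
  induction l with
  | nil => exact absurd rfl hl
  | cons a t ih =>
    obtain rfl : a = c := h a List.mem_cons_self
    cases t with
    | nil => rfl
    | cons a' t =>
      obtain rfl : a' = a := h a' (by simp)
      rw [List.cons_append,
        ← ih (List.cons_ne_nil _ _) fun x hx => h x (List.mem_cons_of_mem _ hx)]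
      simp [dst, List.destutter_cons']

end Destutter

section Marking

variable {k : ℕ} {G : Topo} (g : Fin k → G.V)

theorem head?_of_mem_mu_succ {d : ℕ} {v : G.V} {s : List (Mark k d)}
    (hs : s ∈ Mark.toSet (mu G g (d + 1) v)) : s.head? = some (mu G g d v) := by
  obtain ⟨π, ⟨-, hhead, -⟩, rfl⟩ := hs
  rw [head?_dst, List.head?_map, hhead, Option.map_some]

theorem lab_eq_empty {v : G.V} (hv : v ∉ Set.range g) : lab G g v = ∅ :=
  Finset.filter_eq_empty_iff.2 fun i _ h => hv ⟨i, h⟩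

theorem mu_succ_marked (d : ℕ) (i : Fin k) :
    Mark.toSet (mu G g (d + 1) (g i)) = {[mu G g d (g i)]} := by
  ext s
  constructor
  · rintro ⟨π, ⟨-, hhead, -, hdrop, -⟩, rfl⟩
    obtain ⟨rest, rfl⟩ := List.head?_eq_some_iff.1 hhead
    cases rest with
    | nil => rfl
    | cons y t => exact absurd ⟨i, rfl⟩ (hdrop (g i) (by simp))
  · rintro rfl
    exact ⟨[g i], ⟨List.cons_ne_nil _ _, rfl, List.isChain_singleton _, by simp, g i, ⟨i, rfl⟩,
      rfl⟩, rfl⟩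

theorem mu_marked_eq_iff (d : ℕ) (i : Fin k) (v : G.V) :
    mu G g d (g i) = mu G g d v ↔ g i = v := by
  refine ⟨fun h => ?_, fun h => h ▸ rfl⟩
  induction d with
  | zero =>
    have hi : i ∈ lab G g (g i) := by simp [lab]
    change lab G g (g i) = lab G g v at h
    rw [h] at hi
    simpa [lab] using hi
  | succ d ih =>
    have hmem : [mu G g d (g i)] ∈ Mark.toSet (mu G g (d + 1) (g i)) := by
      rw [mu_succ_marked]; rfl
    rw [h] at hmem
    exact ih (by simpa using head?_of_mem_mu_succ g hmem)

end Marking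

section AdjacentToMarked

variable {k : ℕ} {G : Topo} {g : Fin k → G.V}
  (hE : ∀ v, v ∉ Set.range g → ∀ i, G.E v (g i))
include hE

theorem mu_succ_unmarked_of_forall_unmarked_eq {d : ℕ}
    (hP : ∀ ⦃u v⦄, u ∉ Set.range g → v ∉ Set.range g → mu G g d u = mu G g d v)
    {v : G.V} (hv : v ∉ Set.range g) :
    Mark.toSet (mu G g (d + 1) v) =
      { s | ∃ j : Fin k, s = dst [mu G g d v, mu G g d (g j)] } := by
  ext s
  constructor
  · rintro ⟨π, ⟨-, hhead, -, hdrop, w, ⟨j, rfl⟩, hlast⟩, rfl⟩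
    obtain ⟨l, rfl⟩ := List.getLast?_eq_some_iff.1 hlast
    rw [List.dropLast_concat] at hdrop
    have hl : l ≠ [] := by
      rintro rfl
      exact hv ⟨j, by simpa using hhead⟩
    refine ⟨j, ?_⟩
    rw [List.map_append, List.map_singleton]
    exact dst_append_singleton_of_forall_eq (by simpa using hl)
      (by simpa using fun x hx => hP (hdrop x hx) hv)
  · rintro ⟨j, rfl⟩
    exact ⟨[v, g j], ⟨List.cons_ne_nil _ _, rfl, List.isChain_pair.mpr (hE v hv j),
      by simpa using hv, g j, ⟨j, rfl⟩, rfl⟩, rfl⟩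

theorem mu_unmarked_eq (d : ℕ) {u v : G.V} (hu : u ∉ Set.range g) (hv : v ∉ Set.range g) :
    mu G g d u = mu G g d v := by
  induction d generalizing u v with
  | zero =>
    change lab G g u = lab G g v
    rw [lab_eq_empty g hu, lab_eq_empty g hv]
  | succ d ih =>
    change Mark.toSet (mu G g (d + 1) u) = Mark.toSet (mu G g (d + 1) v)
    rw [mu_succ_unmarked_of_forall_unmarked_eq hE (fun _ _ => ih) hu,
      mu_succ_unmarked_of_forall_unmarked_eq hE (fun _ _ => ih) hv, ih hu hv]

theorem mu_eq_iff (d : ℕ) (u v : G.V) :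
    mu G g d u = mu G g d v ↔ u = v ∨ u ∉ Set.range g ∧ v ∉ Set.range g := by
  constructor
  · intro h
    by_cases hu : u ∈ Set.range g
    · obtain ⟨i, rfl⟩ := hu
      exact Or.inl ((mu_marked_eq_iff g d i v).1 h)
    by_cases hv : v ∈ Set.range g
    · obtain ⟨i, rfl⟩ := hv
      exact Or.inl ((mu_marked_eq_iff g d i u).1 h.symm).symm
    exact Or.inr ⟨hu, hv⟩
  · rintro (rfl | ⟨hu, hv⟩)
    · rfl
    · exact mu_unmarked_eq hE d hu hv

theorem ncard_range_mu (hg : Function.Injective g) {v₀ : G.V} (hv₀ : v₀ ∉ Set.range g)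
    (d : ℕ) :
    (Set.range (mu G g d)).ncard = k + 1 := by
  have hrange : Set.range (mu G g d) = insert (mu G g d v₀) (Set.range (mu G g d ∘ g)) := by
    refine Set.Subset.antisymm ?_
      (Set.insert_subset (Set.mem_range_self _) (Set.range_comp_subset_range _ _))
    rintro _ ⟨u, rfl⟩
    by_cases hu : u ∈ Set.range g
    · obtain ⟨i, rfl⟩ := hu
      exact Or.inr ⟨i, rfl⟩
    · exact Or.inl (mu_unmarked_eq hE d hu hv₀)
  have hmarked : Function.Injective (mu G g d ∘ g) := fun i j h =>
    hg ((mu_marked_eq_iff g d i (g j)).1 h)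
  have hv₀_notMem : mu G g d v₀ ∉ Set.range (mu G g d ∘ g) := fun ⟨i, h⟩ =>
    hv₀ ⟨i, (mu_marked_eq_iff g d i v₀).1 h⟩
  rw [hrange, Set.ncard_insert_of_notMem hv₀_notMem, Set.ncard_range_of_injective hmarked,
    Nat.card_eq_fintype_card, Fintype.card_fin]

end AdjacentToMarked

theorem stmt8_general {k n : ℕ} (hkn : k + 1 ≤ n) (hn : 0 < n)
    (g : Fin k → Fin n) (hg : Function.Injective g) :
    (∀ (d : ℕ) (v : Fin n), v ∉ Set.range g →
      Mark.toSet (mu (clique n hn) g (d + 1) v) =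
        { s | ∃ j : Fin k, s = dst [mu (clique n hn) g d v, mu (clique n hn) g d (g j)] }) ∧
    (∀ (d : ℕ) (u v : Fin n), u ∉ Set.range g → v ∉ Set.range g →
      mu (clique n hn) g d u = mu (clique n hn) g d v) ∧
    (∀ (d : ℕ) (i : Fin k) (v : Fin n), v ≠ g i →
      mu (clique n hn) g d (g i) ≠ mu (clique n hn) g d v) ∧
    (∀ d : ℕ, (Set.range (mu (clique n hn) g d)).ncard = k + 1) ∧
    (∀ d : ℕ, 1 ≤ d → ∀ u v : Fin n,
      (mu (clique n hn) g d u = mu (clique n hn) g d v ↔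
        mu (clique n hn) g 1 u = mu (clique n hn) g 1 v)) := by
  have hE : ∀ v, v ∉ Set.range g → ∀ i, (clique n hn).E v (g i) :=
    fun v hv i h => hv ⟨i, h.symm⟩
  obtain ⟨v₀, hv₀⟩ : ∃ v₀, v₀ ∉ Set.range g := by
    by_contra! hsurj
    have := Fintype.card_le_of_surjective g hsurj
    simp only [Fintype.card_fin] at this
    omega
  -- `G := clique n hn` must be given: `Fin n` is `(clique n hn).V` only after unfolding `clique`.
  exact ⟨fun d _ hv => mu_succ_unmarked_of_forall_unmarked_eq (G := clique n hn) hE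
      (fun _ _ => mu_unmarked_eq hE d) hv,
    fun d _ _ => mu_unmarked_eq (G := clique n hn) hE d,
    fun d i v hv h => hv ((mu_marked_eq_iff (G := clique n hn) g d i v).1 h).symm,
    ncard_range_mu (G := clique n hn) hE hg hv₀,
    fun d _ u v => (mu_eq_iff (G := clique n hn) hE d u v).trans
      (mu_eq_iff (G := clique n hn) hE 1 u v).symm⟩

/-- in the clique of size `n ≥ k + 1`, for `d ≥ 1` (written `d + 1`)
and unmarked `v`, `μ_{d+1}(v) = { destutter [μ_d(v), μ_d(g j)] : j }`; all
unmarked vertices are `∼_d`-equivalent, marked vertices are `∼_d`-equivalent to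
no other vertex, there are exactly `k + 1` classes, and `∼_d` coincides with
`∼_1` for `d ≥ 1`. -/
theorem stmt8 {k n : ℕ} (hk : 1 ≤ k) (hkn : k + 1 ≤ n) (hn : 0 < n)
    (g : Fin k → Fin n) (hg : Function.Injective g) :
    (∀ (d : ℕ) (v : Fin n), v ∉ Set.range g →
      Mark.toSet (mu (clique n hn) g (d + 1) v) =
        { s | ∃ j : Fin k, s = dst [mu (clique n hn) g d v, mu (clique n hn) g d (g j)] }) ∧
    (∀ (d : ℕ) (u v : Fin n), u ∉ Set.range g → v ∉ Set.range g →
      mu (clique n hn) g d u = mu (clique n hn) g d v) ∧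
    (∀ (d : ℕ) (i : Fin k) (v : Fin n), v ≠ g i →
      mu (clique n hn) g d (g i) ≠ mu (clique n hn) g d v) ∧
    (∀ d : ℕ, (Set.range (mu (clique n hn) g d)).ncard = k + 1) ∧
    (∀ d : ℕ, 1 ≤ d → ∀ u v : Fin n,
      (mu (clique n hn) g d u = mu (clique n hn) g d v ↔
        mu (clique n hn) g 1 u = mu (clique n hn) g 1 v)) :=
  stmt8_general hkn hn g hg
end
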